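/- Given the constraint i_H + i_L = I together with the relation α·arcsinh(i_H/β₁) = α·arcsinh(i_L/β₂) + γ for fixed α, β₁, β₂ > 0, γ ∈ ℝ, I ∈ ℝ, there exists a unique pair (i_H, i_L) ∈ ℝ² satisfying both equations. -/

import Mathlib

/-!
Dividing by `α`, the constraint reads `e₁ i_H = e₂ i_L + γ / α` with `eᵢ x = arsinh (x / βᵢ)`
order automorphisms of `ℝ`. Eliminating `i_L = I - i_H`, the map `x ↦ e₁ x - e₂ (I - x)` is
strictly increasing, continuous and unbounded in both directions, hence bijective.
-/

open Filter

theorem existsUnique_prod_of_add_eq {G : Type*} [AddCommGroup G] {P : G → G → Prop} {I : G}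
    (h : ∃! x, P x (I - x)) : ∃! p : G × G, p.1 + p.2 = I ∧ P p.1 p.2 := by
  obtain ⟨x, hx, huniq⟩ := h
  refine ⟨(x, I - x), ⟨add_sub_cancel x I, hx⟩, ?_⟩
  rintro ⟨a, b⟩ ⟨rfl, hab⟩
  obtain rfl : a = x := huniq a (by simpa using hab)
  simp

namespace OrderIso

variable (e₁ e₂ : ℝ ≃o ℝ) (I : ℝ)

theorem strictMono_sub_comp_const_sub : StrictMono fun x => e₁ x - e₂ (I - x) :=
  fun _ _ hab => sub_lt_sub (e₁.strictMono hab) (e₂.strictMono (sub_lt_sub_left hab I))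

theorem surjective_sub_comp_const_sub : Function.Surjective fun x => e₁ x - e₂ (I - x) := by
  have hcont : Continuous fun x => e₁ x - e₂ (I - x) := by
    have := e₁.continuous
    have := e₂.continuous
    fun_prop
  have htop : Tendsto (fun x => e₂ (I - x)) atTop atBot :=
    e₂.tendsto_atBot.comp (OrderIso.subLeft I).tendsto_atTop
  have hbot : Tendsto (fun x => e₂ (I - x)) atBot atTop :=
    e₂.tendsto_atTop.comp (OrderIso.subLeft I).tendsto_atBot
  simp only [sub_eq_add_neg (e₁ _)]
  exact hcont.surjective (e₁.tendsto_atTop.atTop_add_atTop (tendsto_neg_atBot_atTop.comp htop))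
    (e₁.tendsto_atBot.atBot_add_atBot (tendsto_neg_atTop_atBot.comp hbot))

theorem existsUnique_add_eq_and_apply_eq_apply_add (c : ℝ) :
    ∃! p : ℝ × ℝ, p.1 + p.2 = I ∧ e₁ p.1 = e₂ p.2 + c := by
  refine existsUnique_prod_of_add_eq (P := fun x y => e₁ x = e₂ y + c) ?_
  simp_rw [← sub_eq_iff_eq_add']
  exact (strictMono_sub_comp_const_sub e₁ e₂ I).injective.existsUnique_of_mem_range
    (surjective_sub_comp_const_sub e₁ e₂ I c)

end OrderIso

/-- Unique solvability of the algebraic constraint of the zero-dimensional Li-S model: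
given i_H + i_L = I and α·arcsinh(i_H/β₁) = α·arcsinh(i_L/β₂) + γ with α, β₁, β₂ > 0,
there is a unique pair (i_H, i_L). -/
theorem liS_algebraic_constraint_unique_solution
    (α β₁ β₂ γ I : ℝ) (hα : 0 < α) (hβ₁ : 0 < β₁) (hβ₂ : 0 < β₂) :
    ∃! p : ℝ × ℝ, p.1 + p.2 = I ∧
      α * Real.arsinh (p.1 / β₁) = α * Real.arsinh (p.2 / β₂) + γ := by
  have h := OrderIso.existsUnique_add_eq_and_apply_eq_apply_add
    ((OrderIso.divRight₀ β₁ hβ₁).trans Real.sinhOrderIso.symm)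
    ((OrderIso.divRight₀ β₂ hβ₂).trans Real.sinhOrderIso.symm) I (γ / α)
  refine (existsUnique_congr fun p => and_congr_right fun _ => ?_).mp h
  change Real.arsinh (p.1 / β₁) = Real.arsinh (p.2 / β₂) + γ / α ↔ _
  rw [← sub_eq_iff_eq_add', ← sub_eq_iff_eq_add', ← mul_sub, eq_div_iff hα.ne', mul_comm]
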